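/- (1.22) Let x ≥ 0, y > 0, z > 0. Then R_C(x, (y+z)/2) ≤ R_F(x,y,z) ≤ R_C(x, √(yz)). -/
import Mathlib

open MeasureTheory Real

private lemma meas_RC (x c : ℝ) :
    Measurable fun t : ℝ => (t+x) ^ (-(1/2):ℝ) * (t+c)⁻¹ := by
  fun_prop

private lemma integ_RC (x c : ℝ) (hx : 0 ≤ x) (hc : 0 < c) :
    IntegrableOn (fun t => (t+x) ^ (-(1/2):ℝ) * (t+c)⁻¹) (Set.Ioi (0:ℝ)) := by
  rw [← Set.Ioc_union_Ioi_eq_Ioi (zero_le_one (α := ℝ)), integrableOn_union]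
  constructor
  · apply Integrable.mono' (g := fun t => c⁻¹ * t ^ (-(1/2):ℝ))
    · have h : IntervalIntegrable (fun t : ℝ => t ^ (-(1/2):ℝ)) volume 0 1 :=
        intervalIntegral.intervalIntegrable_rpow' (by norm_num)
      rw [intervalIntegrable_iff, Set.uIoc_of_le zero_le_one] at h
      exact h.const_mul _
    · exact ((meas_RC x c).aestronglyMeasurable).restrict
    · rw [ae_restrict_iff' measurableSet_Ioc]
      filter_upwards with t ht
      obtain ⟨ht0, _⟩ := ht
      have h1 : (t+x) ^ (-(1/2):ℝ) ≤ t ^ (-(1/2):ℝ) :=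
        Real.rpow_le_rpow_of_nonpos ht0 (by linarith) (by norm_num)
      have h2 : (t+c)⁻¹ ≤ c⁻¹ := by
        apply inv_anti₀ hc; linarith
      have hn1 : 0 ≤ (t+x) ^ (-(1/2):ℝ) := Real.rpow_nonneg (by linarith) _
      have hn2 : 0 ≤ (t+c)⁻¹ := by positivity
      rw [Real.norm_eq_abs, abs_of_nonneg (mul_nonneg hn1 hn2)]
      calc (t+x) ^ (-(1/2):ℝ) * (t+c)⁻¹ ≤ t ^ (-(1/2):ℝ) * c⁻¹ :=
            mul_le_mul h1 h2 hn2 (Real.rpow_nonneg ht0.le _)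
        _ = c⁻¹ * t ^ (-(1/2):ℝ) := mul_comm _ _
  · apply Integrable.mono' (g := fun t => t ^ (-(3/2):ℝ))
    · exact integrableOn_Ioi_rpow_of_lt (by norm_num) one_pos
    · exact ((meas_RC x c).aestronglyMeasurable).restrict
    · rw [ae_restrict_iff' measurableSet_Ioi]
      filter_upwards with t ht
      have ht1 : (1:ℝ) < t := ht
      have ht0 : (0:ℝ) < t := by linarith
      have h1 : (t+x) ^ (-(1/2):ℝ) ≤ t ^ (-(1/2):ℝ) :=
        Real.rpow_le_rpow_of_nonpos ht0 (by linarith) (by norm_num)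
      have h2 : (t+c)⁻¹ ≤ t⁻¹ := by
        apply inv_anti₀ ht0; linarith
      have hn1 : 0 ≤ (t+x) ^ (-(1/2):ℝ) := Real.rpow_nonneg (by linarith) _
      have hn2 : 0 ≤ (t+c)⁻¹ := by positivity
      rw [Real.norm_eq_abs, abs_of_nonneg (mul_nonneg hn1 hn2)]
      calc (t+x) ^ (-(1/2):ℝ) * (t+c)⁻¹ ≤ t ^ (-(1/2):ℝ) * t⁻¹ :=
            mul_le_mul h1 h2 hn2 (Real.rpow_nonneg ht0.le _)
        _ = t ^ (-(3/2):ℝ) := by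
            rw [← Real.rpow_neg_one t, ← Real.rpow_add ht0]; norm_num

private lemma rpow_neg_half_eq (u : ℝ) (hu : 0 ≤ u) :
    u ^ (-(1/2):ℝ) = (Real.sqrt u)⁻¹ := by
  rw [Real.rpow_neg hu, Real.sqrt_eq_rpow]

noncomputable def RF (x y z : ℝ) : ℝ :=
  (1/2) * ∫ t in Set.Ioi (0:ℝ), ((t+x)*(t+y)*(t+z)) ^ (-(1/2) : ℝ)
noncomputable def RC (x y : ℝ) : ℝ :=
  (1/2) * ∫ t in Set.Ioi (0:ℝ), (t+x) ^ (-(1/2) : ℝ) * (t+y)⁻¹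

/-- (1.22): `R_C` bounds for `R_F`. -/
theorem RC_le_RF_le_RC (x y z : ℝ) (hx : 0 ≤ x) (hy : 0 < y) (hz : 0 < z) :
    RC x ((y + z) / 2) ≤ RF x y z ∧ RF x y z ≤ RC x (Real.sqrt (y * z)) := by
  unfold RF RC
  set s := Real.sqrt (y * z) with hs
  have hs0 : 0 < s := Real.sqrt_pos.mpr (by positivity)
  have hs2 : s ^ 2 = y * z := Real.sq_sqrt (by positivity)
  have hsm : s = Real.sqrt y * Real.sqrt z := Real.sqrt_mul hy.le z
  have hsyz : 2 * s ≤ y + z := by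
    nlinarith [sq_nonneg (Real.sqrt y - Real.sqrt z), Real.sq_sqrt hy.le, Real.sq_sqrt hz.le]
  -- pointwise bounds
  have key : ∀ t ∈ Set.Ioi (0:ℝ),
      (t+x) ^ (-(1/2):ℝ) * (t+(y+z)/2)⁻¹ ≤ ((t+x)*(t+y)*(t+z)) ^ (-(1/2):ℝ) ∧
      ((t+x)*(t+y)*(t+z)) ^ (-(1/2):ℝ) ≤ (t+x) ^ (-(1/2):ℝ) * (t+s)⁻¹ := by
    intro t ht
    have ht0 : (0:ℝ) < t := ht
    have ha : 0 < t + x := by linarith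
    have hp : 0 < t + y := by linarith
    have hq : 0 < t + z := by linarith
    set w := Real.sqrt ((t+y)*(t+z)) with hw
    have hw0 : 0 < w := Real.sqrt_pos.mpr (by positivity)
    have hw2 : w ^ 2 = (t+y)*(t+z) := Real.sq_sqrt (by positivity)
    have hwle : w ≤ t + (y+z)/2 := by
      rw [hw, show (t+y)*(t+z) = (t+(y+z)/2)^2 - ((y-z)/2)^2 by ring]
      calc Real.sqrt ((t+(y+z)/2)^2 - ((y-z)/2)^2) ≤ Real.sqrt ((t+(y+z)/2)^2) :=
            Real.sqrt_le_sqrt (by nlinarith [sq_nonneg ((y-z)/2)])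
        _ = t + (y+z)/2 := Real.sqrt_sq (by linarith)
    have hwge : t + s ≤ w := by
      rw [hw]
      rw [show w = w from rfl] at hw2
      have : (t + s) ^ 2 ≤ (t+y)*(t+z) := by nlinarith
      exact (Real.le_sqrt (by linarith) (by positivity)).mpr this
    have hrw : ((t+x)*(t+y)*(t+z)) ^ (-(1/2):ℝ) = (Real.sqrt (t+x))⁻¹ * w⁻¹ := by
      rw [rpow_neg_half_eq _ (by positivity), mul_assoc,
        Real.sqrt_mul ha.le, mul_inv]
    have hra : (t+x) ^ (-(1/2):ℝ) = (Real.sqrt (t+x))⁻¹ := rpow_neg_half_eq _ ha.le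
    have hsa : 0 < Real.sqrt (t+x) := Real.sqrt_pos.mpr ha
    constructor
    · rw [hrw, hra]
      apply mul_le_mul_of_nonneg_left _ (by positivity)
      exact inv_anti₀ hw0 hwle
    · rw [hrw, hra]
      apply mul_le_mul_of_nonneg_left _ (by positivity)
      exact inv_anti₀ (by linarith) hwge
  -- integrability
  have hiRC1 := integ_RC x ((y+z)/2) hx (by linarith)
  have hiRC2 := integ_RC x s hx hs0
  have hmeasF : Measurable fun t : ℝ => ((t+x)*(t+y)*(t+z)) ^ (-(1/2):ℝ) := by fun_prop
  have hiF : IntegrableOn (fun t => ((t+x)*(t+y)*(t+z)) ^ (-(1/2):ℝ)) (Set.Ioi (0:ℝ)) := by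
    apply Integrable.mono' hiRC2 (hmeasF.aestronglyMeasurable).restrict
    rw [ae_restrict_iff' measurableSet_Ioi]
    filter_upwards with t ht
    have ht0 : (0:ℝ) < t := ht
    rw [Real.norm_eq_abs, abs_of_nonneg (Real.rpow_nonneg (mul_nonneg (mul_nonneg (by linarith) (by linarith)) (by linarith)) _)]
    exact (key t ht).2
  constructor
  · apply mul_le_mul_of_nonneg_left _ (by norm_num : (0:ℝ) ≤ 1/2)
    exact setIntegral_mono_on hiRC1 hiF measurableSet_Ioi (fun t ht => (key t ht).1)
  · apply mul_le_mul_of_nonneg_left _ (by norm_num : (0:ℝ) ≤ 1/2)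
    exact setIntegral_mono_on hiF hiRC2 measurableSet_Ioi (fun t ht => (key t ht).2)
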